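/- Let q = p^e with p an odd prime, and assume 2l | e. Let x_1, x_2 be positive integers with (q−1) | lcm(x_1, x_2) and (q−1)/(p^l − 1) | x_1. Let n = r(q−1)/gcd(x_2, q−1) where 1 ≤ r ≤ (q−1)/gcd(x_1, q−1). Then for any 1 ≤ k ≤ ⌊(p^l + n)/(p^l + 1)⌋ and any 0 ≤ h ≤ k, there exists an [n+1,k]_q MDS linear code C over F_q whose l-Galois hull Hull_l(C) = C ∩ C^{⊥_l} has dimension exactly h. -/

import Mathlib

open Finset

/-- The Hamming weight of a vector: the number of nonzero coordinates. -/
noncomputable def wt {F : Type*} [Zero F] {n : ℕ} (x : Fin n → F) : ℕ :=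
  Set.ncard {i | x i ≠ 0}

/-- The `l`-Galois dual of a linear code `C ⊆ F^n` over a field `F` of characteristic `p`:
the set of `x` with `∑ i, y i * (x i)^(p^l) = 0` for all codewords `y ∈ C`. -/
def galoisDual (p l : ℕ) [Fact p.Prime] {F : Type*} [Field F] [CharP F p] {n : ℕ}
    (C : Submodule F (Fin n → F)) : Submodule F (Fin n → F) where
  carrier := {x | ∀ y ∈ C, ∑ i, y i * x i ^ p ^ l = 0}
  zero_mem' := by
    intro y _
    have hp : p ^ l ≠ 0 := pow_ne_zero _ (Fact.out (p := p.Prime)).ne_zero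
    simp [zero_pow hp]
  add_mem' := by
    intro a b ha hb y hy
    have h : ∀ i : Fin _, (a + b) i ^ p ^ l = a i ^ p ^ l + b i ^ p ^ l := by
      intro i
      simpa using add_pow_char_pow (a i) (b i) (p := p) (n := l)
    calc ∑ i, y i * (a + b) i ^ p ^ l
        = (∑ i, y i * a i ^ p ^ l) + ∑ i, y i * b i ^ p ^ l := by
          rw [← Finset.sum_add_distrib]; exact Finset.sum_congr rfl fun i _ => by
            rw [h i, mul_add]
      _ = 0 := by rw [ha y hy, hb y hy, add_zero]
  smul_mem' := by
    intro c x hx y hy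
    have h : ∀ i : Fin _, (c • x) i ^ p ^ l = c ^ p ^ l * x i ^ p ^ l := by
      intro i; simp [mul_pow]
    calc ∑ i, y i * (c • x) i ^ p ^ l
        = c ^ p ^ l * ∑ i, y i * x i ^ p ^ l := by
          rw [Finset.mul_sum]; exact Finset.sum_congr rfl fun i _ => by rw [h i]; ring
      _ = 0 := by rw [hx y hy, mul_zero]

/-- The `l`-Galois hull `Hull_l(C) = C ∩ C^{⊥_l}` of a linear code. -/
def galoisHull (p l : ℕ) [Fact p.Prime] {F : Type*} [Field F] [CharP F p] {n : ℕ}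
    (C : Submodule F (Fin n → F)) : Submodule F (Fin n → F) :=
  C ⊓ galoisDual p l C

/-- `C` is an `[n, k]` MDS code: it has dimension `k` and minimum Hamming distance
exactly `n - k + 1`. -/
def IsMDSCode {F : Type*} [Field F] {n : ℕ} (C : Submodule F (Fin n → F)) (k : ℕ) : Prop :=
  Module.finrank F C = k ∧
    (∀ x ∈ C, x ≠ 0 → n - k + 1 ≤ wt x) ∧
    (∃ x ∈ C, x ≠ 0 ∧ wt x = n - k + 1)

/-!
The code is a generalized Reed–Solomon code `GRS_k(a, v)` whose column multipliers satisfy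
`v_i ^ (p^l + 1) = w_i u_i`, where `u_i = ∏_{j ≠ i} (a_i - a_j)⁻¹` are the nodal weights of the
evaluation points and `w_i` is some `θ ≠ 1` on a set `S` of `k - h` positions and `1` elsewhere.
As `∑ i, u_i H(a_i)` is the coefficient of `X^(N-1)` of any `H` of degree `< N`, the `l`-Galois
pairing of the codewords `v g(a)` and `v f(a)` collapses to
`(θ - 1) ∑_{i ∈ S} u_i g(a_i) f(a_i)^(p^l)` once `(k - 1) p^l + k < N`. Testing against the
Lagrange basis of `S` shows that the hull consists of the codewords with `f` vanishing on `S`,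
a space of dimension `k - #S = h`.

Such multipliers exist when every `u_i` lies in `𝔽_{p^l}`: as `(p^l - 1)(p^l + 1) ∣ q - 1`, the
elements of `𝔽_{p^l}ˣ` are `(p^l + 1)`-th powers in `𝔽_q`. The evaluation points are `0` and the
cosets `b^j μ_n` for `j < r`, where `n = (q - 1)/gcd(x₂, q - 1)`. Their nodal polynomial is
`X · P(X^n)` with `P = ∏_{j<r} (X - δ^j)` and `δ = b^n`, so `u_i⁻¹ = (P + n X P')(a_i^n)` is fixed
by the `l`-th power of Frobenius once `δ` is. The divisibility hypotheses provide `b` such that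
`δ ∈ 𝔽_{p^l}` is a primitive root of unity of order `(q - 1)/gcd(x₁, q - 1) ≥ r`, which keeps
the points distinct.
-/

open Polynomial Lagrange

theorem pow_eq_self_iff_pow_sub_one_eq_one {M₀ : Type*} [MonoidWithZero M₀] [IsCancelMulZero M₀]
    {z : M₀} (hz : z ≠ 0) {m : ℕ} (hm : m ≠ 0) : z ^ m = z ↔ z ^ (m - 1) = 1 := by
  conv_lhs => rw [← Nat.sub_add_cancel (Nat.one_le_iff_ne_zero.2 hm), pow_succ]
  exact ⟨fun h => mul_right_cancel₀ hz (h.trans (one_mul z).symm), fun h => by rw [h, one_mul]⟩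

theorem Nat.div_gcd_dvd_of_dvd_mul {a b c : ℕ} (ha : 0 < a) (h : a ∣ b * c) :
    a / Nat.gcd c a ∣ b := by
  have h' : a / Nat.gcd a c * Nat.gcd a c ∣ b * Nat.gcd a c := by
    rw [Nat.div_mul_cancel (Nat.gcd_dvd_left a c)]
    exact dvd_mul_gcd_iff_dvd_mul.2 h
  rw [Nat.gcd_comm]
  exact Nat.dvd_of_mul_dvd_mul_right (Nat.gcd_pos_of_pos_left c ha) h'

theorem Nat.sub_one_mul_add_one_dvd_pow_sub_one (x : ℕ) {l e : ℕ} (h : 2 * l ∣ e) :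
    (x ^ l - 1) * (x ^ l + 1) ∣ x ^ e - 1 := by
  rw [mul_comm, ← Nat.sq_sub_sq, one_pow, ← pow_mul']
  exact Nat.pow_sub_one_dvd_pow_sub_one x h

theorem Nat.add_one_lt_of_sub_one_mul_add_one_dvd {P Q : ℕ} (hP : 3 ≤ P) (hQ : 0 < Q)
    (h : (P - 1) * (P + 1) ∣ Q) : P + 1 < Q := by
  have := Nat.le_of_dvd hQ h
  have := Nat.mul_le_mul_right (P + 1) (show 2 ≤ P - 1 by omega)
  omega

theorem Nat.sub_one_mul_add_lt_of_le_div {k P n : ℕ} (hk : 1 ≤ k) (h : k ≤ (P + n) / (P + 1)) :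
    (k - 1) * P + k < n + 1 := by
  have := (Nat.le_div_iff_mul_le (Nat.succ_pos P)).1 h
  obtain ⟨k, rfl⟩ := Nat.exists_eq_add_of_le' hk
  rw [Nat.add_sub_cancel]
  nlinarith

theorem IsPrimitiveRoot.exists_pow_eq {R : Type*} [CommRing R] [IsDomain R] {α z : R}
    {m d d' : ℕ} (hα : IsPrimitiveRoot α m) (hm : 0 < m) (hdd : d * d' ∣ m) (hd' : 0 < d')
    (hz : z ^ d' = 1) : ∃ y, y ^ d = z := by
  have : NeZero m := ⟨hm.ne'⟩
  obtain ⟨c, hc⟩ := (dvd_mul_left d' d).trans hdd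
  obtain ⟨s, -, rfl⟩ := hα.eq_pow_of_pow_eq_one (ξ := z) (by rw [hc, pow_mul, hz, one_pow])
  have hs : d ∣ s := by
    refine Nat.dvd_of_mul_dvd_mul_right hd' (hdd.trans ?_)
    rw [← hα.pow_eq_one_iff_dvd, pow_mul, hz]
  exact ⟨α ^ (s / d), by rw [← pow_mul, Nat.div_mul_cancel hs]⟩

theorem IsPrimitiveRoot.injective_pow_mul_pow {K : Type*} [Field K] {ζ b : K} {n m r : ℕ}
    (hζ : IsPrimitiveRoot ζ n) (hb : IsPrimitiveRoot (b ^ n) m) (hr : r ≤ m) :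
    Function.Injective fun jt : Fin r × Fin n => b ^ (jt.1 : ℕ) * ζ ^ (jt.2 : ℕ) := by
  rintro ⟨j, t⟩ ⟨j', t'⟩ h
  simp only at h
  have hpow : (b ^ n) ^ (j : ℕ) = (b ^ n) ^ (j' : ℕ) := by
    have hζn : ∀ t : ℕ, (ζ ^ t) ^ n = 1 := fun t => by
      rw [← pow_mul, mul_comm, pow_mul, hζ.pow_eq_one, one_pow]
    have := congrArg (· ^ n) h
    simp only [mul_pow, hζn, mul_one] at this
    rwa [← pow_mul, ← pow_mul, mul_comm, pow_mul, mul_comm (j' : ℕ), pow_mul] at this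
  obtain rfl : j = j' := Fin.ext (hb.pow_inj (j.2.trans_le hr) (j'.2.trans_le hr) hpow)
  have hb0 : b ≠ 0 := ne_zero_pow (by have := t.2; omega) (hb.ne_zero (by have := j.2; omega))
  exact Prod.ext rfl (Fin.ext (hζ.pow_inj t.2 t'.2 (mul_left_cancel₀ (pow_ne_zero _ hb0) h)))

theorem FiniteField.exists_isPrimitiveRoot (K : Type*) [Field K] [Finite K] :
    ∃ α : K, IsPrimitiveRoot α (Nat.card K - 1) := by
  obtain ⟨g, hg⟩ := IsCyclic.exists_ofOrder_eq_natCard (α := Kˣ)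
  rw [Nat.card_units] at hg
  exact ⟨g, IsPrimitiveRoot.coe_units_iff.2 (hg ▸ IsPrimitiveRoot.orderOf g)⟩

section Lagrange

variable {K ι : Type*} [Field K]

theorem Lagrange.sum_nodalWeight_mul_eval [DecidableEq ι] {s : Finset ι} {v : ι → K}
    (hvs : Set.InjOn v s) {P : K[X]} (hP : P.degree < #s) :
    ∑ i ∈ s, nodalWeight s v i * P.eval (v i) = P.coeff (#s - 1) := by
  rw [coeff_eq_sum hvs hP]
  refine sum_congr rfl fun i _ => ?_
  rw [nodalWeight, prod_inv_distrib, div_eq_mul_inv, mul_comm]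

theorem Lagrange.nodal_eq_of_monic_of_eval_eq_zero [Fintype ι] {a : ι → K}
    (ha : Function.Injective a) {E : K[X]} (hE : E.Monic) (hdeg : E.natDegree = Fintype.card ι)
    (hroot : ∀ i, E.eval (a i) = 0) : nodal univ a = E := by
  refine (eq_of_monic_of_dvd_of_natDegree_le nodal_monic hE ?_ ?_).symm
  · rw [nodal_eq]
    exact prod_dvd_of_coprime ((pairwise_coprime_X_sub_C ha).set_pairwise _)
      fun i _ => dvd_iff_isRoot.2 (hroot i)
  · rw [natDegree_nodal, hdeg, card_univ]

end Lagrange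

theorem Polynomial.eval_derivative_X_mul_comp_X_pow {R : Type*} [CommRing R] (P : R[X]) (n : ℕ)
    (x : R) :
    (derivative (X * P.comp (X ^ n))).eval x = (P + C (n : R) * X * derivative P).eval (x ^ n) := by
  rcases n.eq_zero_or_pos with rfl | hn
  · simp
  have hx : x * x ^ (n - 1) = x ^ n := by rw [← pow_succ', Nat.sub_add_cancel hn]
  simp only [derivative_mul, derivative_X, one_mul, derivative_comp, derivative_X_pow, eval_add,
    eval_mul, eval_X, eval_comp, eval_pow, eval_C]
  rw [← hx]
  ring

theorem Polynomial.mul_pow_mem_degreeLT {R : Type*} [Semiring R] {f g : R[X]} {k : ℕ}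
    (hg : g ∈ degreeLT R k) (hf : f ∈ degreeLT R k) (m : ℕ) :
    g * f ^ m ∈ degreeLT R ((k - 1) * m + k) := by
  rcases Nat.eq_zero_or_pos k with rfl | hk
  · simp [mem_degreeLT] at hg
    simp [hg]
  have hdeg : ∀ {h : R[X]}, h ∈ degreeLT R k → h.natDegree ≤ k - 1 := fun hh =>
    natDegree_le_iff_degree_le.2 (by
      rwa [← mem_degreeLE, ← degreeLT_succ_eq_degreeLE, Nat.sub_add_cancel hk])
  have hprod : (g * f ^ m).natDegree ≤ (k - 1) + m * (k - 1) :=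
    natDegree_mul_le.trans (add_le_add (hdeg hg) (natDegree_pow_le.trans
      (Nat.mul_le_mul_left m (hdeg hf))))
  rw [mem_degreeLT]
  refine (degree_le_of_natDegree_le hprod).trans_lt ?_
  rw [mul_comm m]
  exact_mod_cast (by omega : k - 1 + (k - 1) * m < (k - 1) * m + k)

section GRS

variable {K : Type*} [Field K] {N k : ℕ}

noncomputable def grsEval (a v : Fin N → K) : K[X] →ₗ[K] Fin N → K :=
  LinearMap.pi fun i => v i • leval (a i)

@[simp]
theorem grsEval_apply (a v : Fin N → K) (f : K[X]) (i : Fin N) :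
    grsEval a v f i = v i * f.eval (a i) :=
  rfl

/-- The generalized Reed–Solomon code `GRS_k(a, v)`. -/
noncomputable def grsCode (k : ℕ) (a v : Fin N → K) : Submodule K (Fin N → K) :=
  (degreeLT K k).map (grsEval a v)

variable {a v : Fin N → K}

theorem card_filter_eval_eq_zero_lt [DecidableEq K] (ha : Function.Injective a) {f : K[X]}
    (hf : f ∈ degreeLT K k) (hf0 : f ≠ 0) : #{i | f.eval (a i) = 0} < k := by
  by_contra! hk
  exact hf0 (eq_zero_of_degree_lt_of_eval_index_eq_zero _ ha.injOn
    ((mem_degreeLT.1 hf).trans_le (by exact_mod_cast hk)) fun i hi => (mem_filter.1 hi).2)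

theorem wt_grsEval [DecidableEq K] (hv : ∀ i, v i ≠ 0) (f : K[X]) :
    wt (grsEval a v f) = N - #{i | f.eval (a i) = 0} := by
  have hsupp : {i | grsEval a v f i ≠ 0} = ↑({i | f.eval (a i) ≠ 0} : Finset (Fin N)) := by
    ext i
    simp [hv i]
  have hsplit := card_filter_add_card_filter_not (s := univ) fun i => f.eval (a i) = 0
  rw [card_univ, Fintype.card_fin] at hsplit
  rw [wt, hsupp, Set.ncard_coe_finset]
  simp only [ne_eq] at hsplit ⊢
  omega

theorem injective_grsEval_comp_subtype (ha : Function.Injective a) (hv : ∀ i, v i ≠ 0)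
    (hk : k ≤ N) : Function.Injective (grsEval a v ∘ₗ (degreeLT K k).subtype) := by
  rw [← LinearMap.ker_eq_bot, LinearMap.ker_eq_bot']
  rintro ⟨f, hf⟩ h0
  refine Subtype.ext (eq_zero_of_degree_lt_of_eval_index_eq_zero univ ha.injOn ?_ fun i _ => ?_)
  · rw [card_univ, Fintype.card_fin]
    exact (mem_degreeLT.1 hf).trans_le (by exact_mod_cast hk)
  · exact (mul_eq_zero.1 (congrFun h0 i)).resolve_left (hv i)

theorem finrank_grsCode (ha : Function.Injective a) (hv : ∀ i, v i ≠ 0) (hk : k ≤ N) :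
    Module.finrank K (grsCode k a v) = k := by
  rw [grsCode, ← Submodule.range_subtype (degreeLT K k), ← LinearMap.range_comp,
    LinearMap.finrank_range_of_inj (injective_grsEval_comp_subtype ha hv hk),
    (degreeLTEquiv K k).finrank_eq, Module.finrank_fin_fun]

theorem isMDSCode_grsCode (ha : Function.Injective a) (hv : ∀ i, v i ≠ 0) (hk1 : 1 ≤ k)
    (hk : k ≤ N) : IsMDSCode (grsCode k a v) k := by
  classical
  refine ⟨finrank_grsCode ha hv hk, ?_, ?_⟩
  · rintro _ ⟨f, hf, rfl⟩ hx
    have hf0 : f ≠ 0 := by rintro rfl; exact hx (map_zero _)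
    have := card_filter_eval_eq_zero_lt ha hf hf0
    rw [wt_grsEval hv]
    omega
  · obtain ⟨S, -, hS⟩ := exists_subset_card_eq (s := (univ : Finset (Fin N))) (n := k - 1)
      (by rw [card_univ, Fintype.card_fin]; omega)
    have hzeros : ({i | (nodal S a).eval (a i) = 0} : Finset (Fin N)) = S := by
      ext i
      simp [eval_nodal, prod_eq_zero_iff, sub_eq_zero, ha.eq_iff]
    have hwt : wt (grsEval a v (nodal S a)) = N - k + 1 := by
      rw [wt_grsEval hv, hzeros, hS]
      omega
    refine ⟨_, ⟨nodal S a, mem_degreeLT.2 ?_, rfl⟩, fun h0 => ?_, hwt⟩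
    · rw [degree_nodal, hS]
      exact_mod_cast (by omega : k - 1 < k)
    · rw [h0] at hwt
      simp [wt] at hwt

end GRS

section GaloisHull

variable {K : Type*} [Field K] {N k : ℕ} {a v : Fin N → K} {S : Finset (Fin N)} {θ : K}

theorem sum_grsEval_mul_grsEval_pow (ha : Function.Injective a) {m : ℕ}
    (hv : ∀ i, v i ^ (m + 1) = (if i ∈ S then θ else 1) * nodalWeight univ a i) {f g : K[X]}
    (hfg : (g * f ^ m).degree < ↑(N - 1)) :
    ∑ i, grsEval a v g i * grsEval a v f i ^ m
      = (θ - 1) * ∑ i ∈ S, nodalWeight univ a i * g.eval (a i) * f.eval (a i) ^ m := by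
  set H := g * f ^ m
  have hH : ∑ i, nodalWeight univ a i * H.eval (a i) = 0 := by
    rw [sum_nodalWeight_mul_eval ha.injOn (hfg.trans_le (by simp)), card_univ,
      Fintype.card_fin, coeff_eq_zero_of_degree_lt hfg]
  have hsplit : ∀ i, grsEval a v g i * grsEval a v f i ^ m
      = nodalWeight univ a i * H.eval (a i)
        + if i ∈ S then (θ - 1) * (nodalWeight univ a i * H.eval (a i)) else 0 := by
    intro i
    have hvi := hv i
    simp only [grsEval_apply, H, eval_mul, eval_pow, mul_pow]
    split_ifs at hvi ⊢ <;> linear_combination (g.eval (a i) * f.eval (a i) ^ m) * hvi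
  rw [sum_congr rfl fun i _ => hsplit i, sum_add_distrib, hH, zero_add, sum_ite_mem, univ_inter,
    mul_sum]
  simp only [H, eval_mul, eval_pow, mul_assoc]

variable (p l : ℕ) [Fact p.Prime] [CharP K p]

theorem grsEval_mem_galoisDual_grsCode_iff (ha : Function.Injective a)
    (hv : ∀ i, v i ^ (p ^ l + 1) = (if i ∈ S then θ else 1) * nodalWeight univ a i)
    (hθ : θ ≠ 1) (hS : #S ≤ k) (hN : (k - 1) * p ^ l + k < N) {f : K[X]}
    (hf : f ∈ degreeLT K k) :
    grsEval a v f ∈ galoisDual p l (grsCode k a v) ↔ ∀ i ∈ S, f.eval (a i) = 0 := by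
  have hsum : ∀ g ∈ degreeLT K k, ∑ i, grsEval a v g i * grsEval a v f i ^ p ^ l
      = (θ - 1) * ∑ i ∈ S, nodalWeight univ a i * g.eval (a i) * f.eval (a i) ^ p ^ l :=
    fun g hg => sum_grsEval_mul_grsEval_pow ha hv <| mem_degreeLT.1 <|
      degreeLT_mono (by omega) (mul_pow_mem_degreeLT hg hf _)
  have hpl : p ^ l ≠ 0 := pow_ne_zero _ (Fact.out : p.Prime).ne_zero
  constructor
  · intro hdual j hj
    have hbasis : Lagrange.basis S a j ∈ degreeLT K k := by
      rw [mem_degreeLT, degree_basis ha.injOn hj]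
      exact_mod_cast (by have := card_pos.2 ⟨j, hj⟩; omega : #S - 1 < k)
    have h0 := hdual _ ⟨_, hbasis, rfl⟩
    rw [hsum _ hbasis, sum_eq_single_of_mem j hj fun i hi hij => by
      rw [eval_basis_of_ne hij.symm hi, mul_zero, zero_mul], eval_basis_self ha.injOn hj,
      mul_one] at h0
    simpa [sub_eq_zero, hθ, nodalWeight_ne_zero ha.injOn (mem_univ j),
      (Fact.out : p.Prime).ne_zero] using h0
  · rintro hzero _ ⟨g, hg, rfl⟩
    rw [hsum g hg, sum_eq_zero fun i hi => by rw [hzero i hi, zero_pow hpl, mul_zero], mul_zero]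

theorem finrank_galoisHull_grsCode (ha : Function.Injective a) (hv0 : ∀ i, v i ≠ 0)
    (hv : ∀ i, v i ^ (p ^ l + 1) = (if i ∈ S then θ else 1) * nodalWeight univ a i)
    (hθ : θ ≠ 1) (hS : #S ≤ k) (hN : (k - 1) * p ^ l + k < N) :
    Module.finrank K (galoisHull p l (grsCode k a v)) = k - #S := by
  set evalS : degreeLT K k →ₗ[K] S → K :=
    (LinearMap.pi fun i : S => leval (a i)) ∘ₗ (degreeLT K k).subtype
  have hsurj : Function.Surjective evalS := fun r =>
    ⟨⟨_, degreeLT_mono hS ((funEquivDegreeLT ha.injOn).symm r).2⟩,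
      (funEquivDegreeLT ha.injOn).apply_symm_apply r⟩
  have hker : Module.finrank K (LinearMap.ker evalS) = k - #S := by
    have := evalS.finrank_range_add_finrank_ker
    rw [LinearMap.range_eq_top.2 hsurj, finrank_top, Module.finrank_fintype_fun_eq_card,
      Fintype.card_coe, (degreeLTEquiv K k).finrank_eq, Module.finrank_fin_fun] at this
    omega
  have hhull : galoisHull p l (grsCode k a v)
      = (LinearMap.ker evalS).map (grsEval a v ∘ₗ (degreeLT K k).subtype) := by
    ext x
    simp only [galoisHull, Submodule.mem_inf, Submodule.mem_map, LinearMap.mem_ker]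
    constructor
    · rintro ⟨⟨f, hf, rfl⟩, hdual⟩
      refine ⟨⟨f, hf⟩, funext fun i => ?_, rfl⟩
      exact (grsEval_mem_galoisDual_grsCode_iff p l ha hv hθ hS hN hf).1 hdual i i.2
    · rintro ⟨⟨f, hf⟩, hzero, rfl⟩
      refine ⟨⟨f, hf, rfl⟩, (grsEval_mem_galoisDual_grsCode_iff p l ha hv hθ hS hN hf).2
        fun i hi => congrFun hzero ⟨i, hi⟩⟩
  rw [hhull, ← hker]
  exact (Submodule.equivMapOfInjective _
    (injective_grsEval_comp_subtype ha hv0 (by omega)) _).finrank_eq.symm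

theorem exists_isMDSCode_finrank_galoisHull (ha : Function.Injective a) {y : Fin N → K}
    (hy : ∀ i, y i ^ (p ^ l + 1) = nodalWeight univ a i) {τ : K} (hτ0 : τ ≠ 0)
    (hτ : τ ^ (p ^ l + 1) ≠ 1) {h : ℕ} (hk : 1 ≤ k) (hh : h ≤ k)
    (hN : (k - 1) * p ^ l + k < N) :
    ∃ C : Submodule K (Fin N → K), IsMDSCode C k ∧ Module.finrank K (galoisHull p l C) = h := by
  obtain ⟨S, -, hS⟩ := exists_subset_card_eq (s := (univ : Finset (Fin N))) (n := k - h)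
    (by rw [card_univ, Fintype.card_fin]; omega)
  set v : Fin N → K := fun i => (if i ∈ S then τ else 1) * y i
  have hv : ∀ i,
      v i ^ (p ^ l + 1) = (if i ∈ S then τ ^ (p ^ l + 1) else 1) * nodalWeight univ a i :=
    fun i => by rw [mul_pow, ite_pow, one_pow, hy]
  have hv0 : ∀ i, v i ≠ 0 := fun i => by
    refine mul_ne_zero (by split_ifs <;> simp [hτ0]) fun hy0 => ?_
    exact nodalWeight_ne_zero ha.injOn (mem_univ i) (by rw [← hy, hy0, zero_pow (by omega)])
  refine ⟨grsCode k a v, isMDSCode_grsCode ha hv0 hk (by omega), ?_⟩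
  rw [finrank_galoisHull_grsCode p l ha hv0 hv hτ (by omega) hN, hS]
  omega

end GaloisHull

theorem exists_injective_map_nodalWeight_eq {K : Type*} [Field K] (φ : K →+* K) {ζ b : K}
    {n m r : ℕ} (hn : 0 < n) (hζ : IsPrimitiveRoot ζ n) (hb : IsPrimitiveRoot (b ^ n) m)
    (hr : r ≤ m) (hφ : φ (b ^ n) = b ^ n) :
    ∃ a : Fin (r * n + 1) → K, Function.Injective a ∧
      ∀ i, φ (nodalWeight univ a i) = nodalWeight univ a i := by
  set pts : Fin r × Fin n → K := fun jt => b ^ (jt.1 : ℕ) * ζ ^ (jt.2 : ℕ)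
  set a : Fin (r * n + 1) → K := Fin.cons 0 (pts ∘ finProdFinEquiv.symm)
  have hinj : Function.Injective a := by
    refine Fin.cons_injective_iff.2 ⟨?_, (hζ.injective_pow_mul_pow hb hr).comp
      finProdFinEquiv.symm.injective⟩
    rintro ⟨i, hi⟩
    have hb0 : b ≠ 0 :=
      ne_zero_pow hn.ne' (hb.ne_zero (by have := (finProdFinEquiv.symm i).1.2; omega))
    exact mul_ne_zero (pow_ne_zero _ hb0) (pow_ne_zero _ (hζ.ne_zero hn.ne')) hi
  have hpts : ∀ jt, pts jt ^ n = (b ^ n) ^ (jt.1 : ℕ) := fun jt => by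
    rw [mul_pow, ← pow_mul, ← pow_mul, mul_comm _ n, pow_mul, mul_comm _ n, pow_mul ζ,
      hζ.pow_eq_one, one_pow, mul_one]
  generalize b ^ n = δ at hb hφ hpts
  have hroot : ∀ i, a i = 0 ∨ ∃ j < r, a i ^ n = δ ^ j :=
    Fin.cases (Or.inl rfl) fun i => Or.inr ⟨_, (finProdFinEquiv.symm i).1.2, hpts _⟩
  set P : K[X] := ∏ j ∈ range r, (X - C (δ ^ j))
  have hPmonic : P.Monic := monic_prod_of_monic _ _ fun j _ => monic_X_sub_C _
  have hPcomp : (P.comp (X ^ n)).Monic :=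
    hPmonic.comp (monic_X_pow n) (by rw [natDegree_X_pow]; exact hn.ne')
  have hnodal : nodal univ a = X * P.comp (X ^ n) := by
    refine nodal_eq_of_monic_of_eval_eq_zero hinj (monic_X.mul hPcomp) ?_ fun i => ?_
    · rw [monic_X.natDegree_mul hPcomp, natDegree_X,
        natDegree_comp, natDegree_X_pow, natDegree_prod_of_monic _ _ fun j _ => monic_X_sub_C _]
      simp only [natDegree_X_sub_C, sum_const, card_range, smul_eq_mul, mul_one,
        Fintype.card_fin]
      omega
    · rcases hroot i with h0 | ⟨j, hj, hj'⟩
      · rw [eval_mul, eval_X, h0, zero_mul]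
      · rw [eval_mul, eval_comp, eval_pow, eval_X, hj', eval_prod,
          prod_eq_zero (mem_range.2 hj) (by simp), mul_zero]
  have hQ : (P + C (n : K) * X * derivative P).map φ = P + C (n : K) * X * derivative P := by
    have hP : P.map φ = P := by
      simp only [P, Polynomial.map_prod, Polynomial.map_sub, Polynomial.map_X, Polynomial.map_pow,
        Polynomial.map_C, map_pow, hφ]
    simp only [Polynomial.map_add, Polynomial.map_mul, map_natCast, Polynomial.map_natCast,
      Polynomial.map_X, ← derivative_map, hP]
  refine ⟨a, hinj, fun i => ?_⟩
  have hfix : φ (a i ^ n) = a i ^ n := by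
    rcases hroot i with h0 | ⟨j, -, hj⟩
    · rw [h0, zero_pow hn.ne', map_zero]
    · rw [hj, map_pow, hφ]
  -- `(nodalWeight univ a i)⁻¹` is a `φ`-stable polynomial evaluated at the `φ`-fixed `a i ^ n`.
  rw [nodalWeight_eq_eval_derivative_nodal (mem_univ i), hnodal, eval_derivative_X_mul_comp_X_pow,
    map_inv₀, ← eval_map_apply, hfix, hQ]

theorem exists_injective_nodalWeight_pow_eq_self {K : Type*} [Field K] {p l q x1 x2 r : ℕ}
    [Fact p.Prime] [CharP K p] {α : K} (hα : IsPrimitiveRoot α q) (hq : 0 < q)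
    (hlcm : q ∣ Nat.lcm x1 x2) (hdvd : q / (p ^ l - 1) ∣ x1) (hpl : p ^ l - 1 ∣ q)
    (hr : r ≤ q / Nat.gcd x1 q) :
    ∃ a : Fin (r * (q / Nat.gcd x2 q) + 1) → K, Function.Injective a ∧
      ∀ i, nodalWeight univ a i ^ p ^ l = nodalWeight univ a i := by
  set g1 := Nat.gcd x1 q
  set n1 := q / Nat.gcd x2 q
  have hg2 : Nat.gcd x2 q ∣ q := Nat.gcd_dvd_right _ _
  have hn1 : 0 < n1 := Nat.div_pos (Nat.le_of_dvd hq hg2) (Nat.gcd_pos_of_pos_right _ hq)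
  have hn1g1 : n1 ∣ g1 := Nat.dvd_gcd
    (Nat.div_gcd_dvd_of_dvd_mul hq (hlcm.trans (Nat.lcm_dvd_mul x1 x2))) (Nat.div_dvd_of_dvd hg2)
  have hζ : IsPrimitiveRoot (α ^ Nat.gcd x2 q) n1 :=
    hα.pow_of_dvd (Nat.gcd_pos_of_pos_right _ hq).ne' hg2
  have hb : (α ^ (g1 / n1)) ^ n1 = α ^ g1 := by rw [← pow_mul, Nat.div_mul_cancel hn1g1]
  have hδ : IsPrimitiveRoot (α ^ g1) (q / g1) :=
    hα.pow_of_dvd (Nat.gcd_pos_of_pos_right _ hq).ne' (Nat.gcd_dvd_right _ _)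
  have hfix : (α ^ g1) ^ p ^ l = α ^ g1 := by
    rw [pow_eq_self_iff_pow_sub_one_eq_one (pow_ne_zero _ (hα.ne_zero hq.ne'))
      (pow_ne_zero _ (Fact.out : p.Prime).ne_zero), ← pow_mul, hα.pow_eq_one_iff_dvd]
    have := Nat.mul_dvd_mul_right (Nat.dvd_gcd hdvd (Nat.div_dvd_of_dvd hpl)) (p ^ l - 1)
    rwa [Nat.div_mul_cancel hpl] at this
  obtain ⟨a, ha, hw⟩ := exists_injective_map_nodalWeight_eq (iterateFrobenius K p l) hn1 hζ
    (hb ▸ hδ) hr (by rw [hb, iterateFrobenius_def, hfix])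
  exact ⟨a, ha, fun i => by rw [← iterateFrobenius_def]; exact hw i⟩

theorem exists_mds_code_galoisHull_dim_thm3_2_general
    (p e l x1 x2 r n k h : ℕ) [Fact p.Prime] (hodd : Odd p) (he : 0 < e)
    (h2l : 2 * l ∣ e)
    (hlcm : (p ^ e - 1) ∣ Nat.lcm x1 x2)
    (hdvd : (p ^ e - 1) / (p ^ l - 1) ∣ x1)
    (hr2 : r ≤ (p ^ e - 1) / Nat.gcd x1 (p ^ e - 1))
    (hn : n = r * ((p ^ e - 1) / Nat.gcd x2 (p ^ e - 1)))
    (hk1 : 1 ≤ k) (hk2 : k ≤ (p ^ l + n) / (p ^ l + 1)) (hh : h ≤ k) :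
    ∃ C : Submodule (GaloisField p e) (Fin (n + 1) → GaloisField p e),
      IsMDSCode C k ∧
      Module.finrank (GaloisField p e) (galoisHull p l C) = h := by
  have hp3 : 3 ≤ p := by
    obtain ⟨c, rfl⟩ := hodd
    have := (Fact.out : (2 * c + 1).Prime).two_le
    omega
  have hl : l ≠ 0 := by rintro rfl; simp at h2l; omega
  have hpl : 3 ≤ p ^ l := hp3.trans (Nat.le_self_pow hl p)
  have hq := Nat.sub_one_mul_add_one_dvd_pow_sub_one p h2l
  have hqpos : 0 < p ^ e - 1 := Nat.sub_pos_of_lt (Nat.one_lt_pow he.ne' (by omega))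
  have hqbig := Nat.add_one_lt_of_sub_one_mul_add_one_dvd hpl hqpos hq
  obtain ⟨α, hα⟩ := FiniteField.exists_isPrimitiveRoot (GaloisField p e)
  rw [GaloisField.card p e he.ne'] at hα
  subst hn
  obtain ⟨a, ha, hfix⟩ := exists_injective_nodalWeight_pow_eq_self hα hqpos hlcm hdvd
    (dvd_of_mul_right_dvd hq) hr2
  choose y hy using fun i => hα.exists_pow_eq hqpos (mul_comm (p ^ l - 1) _ ▸ hq) (by omega)
    ((pow_eq_self_iff_pow_sub_one_eq_one (nodalWeight_ne_zero ha.injOn (mem_univ i))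
      (by positivity)).1 (hfix i))
  refine exists_isMDSCode_finrank_galoisHull p l ha hy (hα.ne_zero hqpos.ne') ?_ hk1 hh
    (Nat.sub_one_mul_add_lt_of_le_div hk1 hk2)
  rw [Ne, hα.pow_eq_one_iff_dvd]
  exact fun hd => (Nat.le_of_dvd (by omega) hd).not_gt hqbig

/-- Theorem 3(2): let `q = p^e` with `p` an odd prime and `2l ∣ e`.
Assume `(q-1) ∣ lcm(x₁, x₂)` and `(q-1)/(p^l-1) ∣ x₁`, and let
`n = r(q-1)/gcd(x₂, q-1)` with `1 ≤ r ≤ (q-1)/gcd(x₁, q-1)`.  Then for every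
`1 ≤ k ≤ ⌊(p^l + n)/(p^l + 1)⌋` and every admissible `h` there is an
`[n + 1, k]_q` MDS code whose `l`-Galois hull has dimension exactly `h`. -/
theorem exists_mds_code_galoisHull_dim_thm3_2
    (p e l x1 x2 r n k h : ℕ) [Fact p.Prime] (hodd : Odd p) (he : 0 < e)
    (h2l : 2 * l ∣ e) (hx1 : 0 < x1) (hx2 : 0 < x2)
    (hlcm : (p ^ e - 1) ∣ Nat.lcm x1 x2)
    (hdvd : (p ^ e - 1) / (p ^ l - 1) ∣ x1)
    (hr1 : 1 ≤ r) (hr2 : r ≤ (p ^ e - 1) / Nat.gcd x1 (p ^ e - 1))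
    (hn : n = r * ((p ^ e - 1) / Nat.gcd x2 (p ^ e - 1)))
    (hk1 : 1 ≤ k) (hk2 : k ≤ (p ^ l + n) / (p ^ l + 1)) (hh : h ≤ k) :
    ∃ C : Submodule (GaloisField p e) (Fin (n + 1) → GaloisField p e),
      IsMDSCode C k ∧
      Module.finrank (GaloisField p e) (galoisHull p l C) = h :=
  exists_mds_code_galoisHull_dim_thm3_2_general p e l x1 x2 r n k h hodd he h2l hlcm hdvd hr2 hn hk1
    hk2 hh
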